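/- If Σ ⊬ A (in the Hilbert system S over L⊃), then there exists a set of formulas Π ⊇ Σ such that A ∉ Π, Π is a prime Π-theory, and Π is Π-deductively closed. -/

import Mathlib

/-- Formulas of the language L⊃ : propositional variables with ∧, ∨,
    intuitionistic → (`imp`) and classical ⊃ (`sup`). -/
inductive Formula : Type
  | var : ℕ → Formula
  | and : Formula → Formula → Formula
  | or  : Formula → Formula → Formula
  | imp : Formula → Formula → Formula
  | sup : Formula → Formula → Formula

/-- The Hilbert system S : `SDeriv Γ A` means Γ ⊢ A. -/
inductive SDeriv : Set Formula → Formula → Prop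
  | hyp {Γ A} : A ∈ Γ → SDeriv Γ A
  | ax1 {Γ} (A B : Formula) : SDeriv Γ (A.imp (B.imp A))
  | ax2 {Γ} (A B C : Formula) :
      SDeriv Γ ((A.imp (B.imp C)).imp ((A.imp B).imp (A.imp C)))
  | ax3 {Γ} (A B : Formula) : SDeriv Γ ((A.and B).imp A)
  | ax4 {Γ} (A B : Formula) : SDeriv Γ ((A.and B).imp B)
  | ax5 {Γ} (A B C : Formula) :
      SDeriv Γ ((C.imp A).imp ((C.imp B).imp (C.imp (A.and B))))
  | ax6 {Γ} (A B : Formula) : SDeriv Γ (A.imp (A.or B))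
  | ax7 {Γ} (A B : Formula) : SDeriv Γ (B.imp (A.or B))
  | ax8 {Γ} (A B C : Formula) :
      SDeriv Γ ((A.imp C).imp ((B.imp C).imp ((A.or B).imp C)))
  | axM1 {Γ} (A B : Formula) : SDeriv Γ ((A.imp B).sup (A.sup B))
  | axM2 {Γ} (A B C : Formula) :
      SDeriv Γ ((A.sup (B.sup C)).imp ((A.sup B).sup (A.sup C)))
  | axM3 {Γ} (A B C : Formula) :
      SDeriv Γ ((A.sup (B.imp C)).imp (B.imp (A.sup C)))
  | axM4 {Γ} (A B C : Formula) :
      SDeriv Γ ((A.imp (B.sup C)).imp (B.sup (A.imp C)))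
  | axM5 {Γ} (A B C : Formula) :
      SDeriv Γ (((A.sup B).sup C).imp ((A.sup C).imp C))
  | axM6 {Γ} (A B C : Formula) :
      SDeriv Γ ((A.sup C).imp ((B.sup C).imp ((A.or B).sup C)))
  | mp {Γ A B} : SDeriv Γ A → SDeriv Γ (A.sup B) → SDeriv Γ B

/-- `PiTheory P S` : S is a P-theory (clauses (a) and (b)), where ⊢_P is
    derivability in S from the extra assumptions P. -/
def PiTheory (P S : Set Formula) : Prop :=
  (∀ A B : Formula, A ∈ S → B ∈ S → Formula.and A B ∈ S) ∧
  (∀ A B : Formula, SDeriv P (A.imp B) → A ∈ S → B ∈ S)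

/-- S is prime. -/
def IsPrimeSet (S : Set Formula) : Prop :=
  ∀ A B : Formula, Formula.or A B ∈ S → A ∈ S ∨ B ∈ S

/-- Conjunction A ∧ B₁ ∧ ⋯ ∧ Bₙ of a nonempty list. -/
def conjFold : Formula → List Formula → Formula
  | A, [] => A
  | A, B :: L => A.and (conjFold B L)

/-- Disjunction A ∨ B₁ ∨ ⋯ ∨ Bₙ of a nonempty list. -/
def disjFold : Formula → List Formula → Formula
  | A, [] => A
  | A, B :: L => A.or (disjFold B L)

/-- `SeqDeriv P S D` : Σ ⊢_Π Δ, i.e. Σ∪Π ⊢ D₁ ∨ ⋯ ∨ Dₙ for some D₁,…,Dₙ ∈ Δ. -/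
def SeqDeriv (P S D : Set Formula) : Prop :=
  ∃ (D₀ : Formula) (Ds : List Formula), D₀ ∈ D ∧ (∀ X ∈ Ds, X ∈ D) ∧
    SDeriv (S ∪ P) (disjFold D₀ Ds)

/-- `ImpDeriv P S D` : ⊢_Π Σ→Δ, i.e. ⊢_Π (C₁∧⋯∧Cₙ)→(D₁∨⋯∨Dₘ)
    for some C₁,…,Cₙ ∈ Σ and D₁,…,Dₘ ∈ Δ. -/
def ImpDeriv (P S D : Set Formula) : Prop :=
  ∃ (C₀ : Formula) (Cs : List Formula) (D₀ : Formula) (Ds : List Formula),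
    C₀ ∈ S ∧ (∀ X ∈ Cs, X ∈ S) ∧ D₀ ∈ D ∧ (∀ X ∈ Ds, X ∈ D) ∧
    SDeriv P ((conjFold C₀ Cs).imp (disjFold D₀ Ds))

/-- ⟨Σ,Δ⟩ is a Π-partition. -/
def PiPartition (P S D : Set Formula) : Prop :=
  S ∪ D = Set.univ ∧ ¬ ImpDeriv P S D

/-- S is P-deductively closed. -/
def PiDedClosed (P S : Set Formula) : Prop :=
  ∀ A : Formula, SDeriv (S ∪ P) A → A ∈ S

/-!
Zorn's lemma gives a maximal `Π ⊇ Σ` with `Π ⊬ A`; chains are harmless because a derivation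
uses only finitely many hypotheses. For `B ∉ Π`, maximality gives `Π, B ⊢ A`, so
`Π ⊢ B ⊃ A` by the deduction theorem for `⊃`. Hence anything `Π` derives lies in `Π`
(otherwise modus ponens would yield `Π ⊢ A`), and AxM6 turns `B, C ∉ Π` into `Π ⊢ (B ∨ C) ⊃ A`,
which makes `Π` prime.
-/

namespace SDeriv

variable {Γ Δ : Set Formula} {A B : Formula}

theorem mono (h : SDeriv Γ B) (hΓΔ : Γ ⊆ Δ) : SDeriv Δ B := by
  induction h generalizing Δ with
  | hyp hm => exact .hyp (hΓΔ hm)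
  | mp _ _ ih₁ ih₂ => exact .mp (ih₁ hΓΔ) (ih₂ hΓΔ)
  | ax1 => exact .ax1 _ _
  | ax2 => exact .ax2 _ _ _
  | ax3 => exact .ax3 _ _
  | ax4 => exact .ax4 _ _
  | ax5 => exact .ax5 _ _ _
  | ax6 => exact .ax6 _ _
  | ax7 => exact .ax7 _ _
  | ax8 => exact .ax8 _ _ _
  | axM1 => exact .axM1 _ _
  | axM2 => exact .axM2 _ _ _
  | axM3 => exact .axM3 _ _ _
  | axM4 => exact .axM4 _ _ _
  | axM5 => exact .axM5 _ _ _
  | axM6 => exact .axM6 _ _ _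

theorem sup_of_imp (h : SDeriv Γ (A.imp B)) : SDeriv Γ (A.sup B) :=
  .mp h (.axM1 A B)

theorem mp_imp (hA : SDeriv Γ A) (hAB : SDeriv Γ (A.imp B)) : SDeriv Γ B :=
  .mp hA (sup_of_imp hAB)

theorem imp_self (A : Formula) : SDeriv Γ (A.imp A) :=
  mp_imp (.ax1 A A) (mp_imp (.ax1 A (A.imp A)) (.ax2 A (A.imp A) A))

theorem imp_of (h : SDeriv Γ B) : SDeriv Γ (A.imp B) :=
  mp_imp h (.ax1 B A)

theorem and_intro (hA : SDeriv Γ A) (hB : SDeriv Γ B) : SDeriv Γ (A.and B) :=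
  mp_imp (imp_self A) (mp_imp (imp_of hB) (mp_imp (imp_of hA) (.ax5 A B (A.imp A))))

theorem sup_intro (h : SDeriv (insert A Γ) B) : SDeriv Γ (A.sup B) := by
  induction h with
  | hyp hm =>
    rcases hm with rfl | hm
    · exact sup_of_imp (imp_self _)
    · exact sup_of_imp (imp_of (.hyp hm))
  | mp _ _ ih₁ ih₂ => exact .mp ih₁ (mp_imp ih₂ (.axM2 _ _ _))
  | ax1 => exact sup_of_imp (imp_of (.ax1 _ _))
  | ax2 => exact sup_of_imp (imp_of (.ax2 _ _ _))
  | ax3 => exact sup_of_imp (imp_of (.ax3 _ _))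
  | ax4 => exact sup_of_imp (imp_of (.ax4 _ _))
  | ax5 => exact sup_of_imp (imp_of (.ax5 _ _ _))
  | ax6 => exact sup_of_imp (imp_of (.ax6 _ _))
  | ax7 => exact sup_of_imp (imp_of (.ax7 _ _))
  | ax8 => exact sup_of_imp (imp_of (.ax8 _ _ _))
  | axM1 => exact sup_of_imp (imp_of (.axM1 _ _))
  | axM2 => exact sup_of_imp (imp_of (.axM2 _ _ _))
  | axM3 => exact sup_of_imp (imp_of (.axM3 _ _ _))
  | axM4 => exact sup_of_imp (imp_of (.axM4 _ _ _))
  | axM5 => exact sup_of_imp (imp_of (.axM5 _ _ _))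
  | axM6 => exact sup_of_imp (imp_of (.axM6 _ _ _))

theorem exists_finite_subset (h : SDeriv Γ B) : ∃ Δ ⊆ Γ, Δ.Finite ∧ SDeriv Δ B := by
  induction h with
  | hyp hm =>
    exact ⟨{_}, Set.singleton_subset_iff.2 hm, Set.finite_singleton _, .hyp (Set.mem_singleton _)⟩
  | mp _ _ ih₁ ih₂ =>
    obtain ⟨Δ₁, hΔ₁, hfin₁, h₁⟩ := ih₁
    obtain ⟨Δ₂, hΔ₂, hfin₂, h₂⟩ := ih₂
    exact ⟨Δ₁ ∪ Δ₂, Set.union_subset hΔ₁ hΔ₂, hfin₁.union hfin₂,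
      .mp (h₁.mono Set.subset_union_left) (h₂.mono Set.subset_union_right)⟩
  | ax1 => exact ⟨∅, Set.empty_subset _, Set.finite_empty, .ax1 _ _⟩
  | ax2 => exact ⟨∅, Set.empty_subset _, Set.finite_empty, .ax2 _ _ _⟩
  | ax3 => exact ⟨∅, Set.empty_subset _, Set.finite_empty, .ax3 _ _⟩
  | ax4 => exact ⟨∅, Set.empty_subset _, Set.finite_empty, .ax4 _ _⟩
  | ax5 => exact ⟨∅, Set.empty_subset _, Set.finite_empty, .ax5 _ _ _⟩
  | ax6 => exact ⟨∅, Set.empty_subset _, Set.finite_empty, .ax6 _ _⟩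
  | ax7 => exact ⟨∅, Set.empty_subset _, Set.finite_empty, .ax7 _ _⟩
  | ax8 => exact ⟨∅, Set.empty_subset _, Set.finite_empty, .ax8 _ _ _⟩
  | axM1 => exact ⟨∅, Set.empty_subset _, Set.finite_empty, .axM1 _ _⟩
  | axM2 => exact ⟨∅, Set.empty_subset _, Set.finite_empty, .axM2 _ _ _⟩
  | axM3 => exact ⟨∅, Set.empty_subset _, Set.finite_empty, .axM3 _ _ _⟩
  | axM4 => exact ⟨∅, Set.empty_subset _, Set.finite_empty, .axM4 _ _ _⟩
  | axM5 => exact ⟨∅, Set.empty_subset _, Set.finite_empty, .axM5 _ _ _⟩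
  | axM6 => exact ⟨∅, Set.empty_subset _, Set.finite_empty, .axM6 _ _ _⟩

theorem exists_mem_of_sUnion {c : Set (Set Formula)} (h : SDeriv (⋃₀ c) B)
    (hc : IsChain (· ⊆ ·) c) (hne : c.Nonempty) : ∃ Γ ∈ c, SDeriv Γ B := by
  obtain ⟨Δ, hΔc, hfin, hΔ⟩ := h.exists_finite_subset
  obtain ⟨Γ, hΓ, hΔΓ⟩ := hc.directedOn.exists_mem_subset_of_finite_of_subset_sUnion hne hfin hΔc
  exact ⟨Γ, hΓ, hΔ.mono hΔΓ⟩

end SDeriv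

theorem PiDedClosed.piTheory {P S : Set Formula} (h : PiDedClosed P S) : PiTheory P S :=
  ⟨fun _ _ hA hB => h _ (.and_intro (.hyp (.inl hA)) (.hyp (.inl hB))),
    fun _ _ hAB hA => h _ (.mp_imp (.hyp (.inl hA)) (hAB.mono Set.subset_union_right))⟩

def MaximalNonDeriving (A : Formula) (P : Set Formula) : Prop :=
  Maximal (fun Γ => ¬ SDeriv Γ A) P

theorem exists_maximalNonDeriving_superset {S : Set Formula} {A : Formula}
    (h : ¬ SDeriv S A) : ∃ P, S ⊆ P ∧ MaximalNonDeriving A P := by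
  refine zorn_subset_nonempty {Γ | ¬ SDeriv Γ A} (fun c hc hchain hne => ?_) S h
  refine ⟨⋃₀ c, fun hA => ?_, fun _ => Set.subset_sUnion_of_mem⟩
  obtain ⟨Γ, hΓ, hΓA⟩ := hA.exists_mem_of_sUnion hchain hne
  exact hc hΓ hΓA

namespace MaximalNonDeriving

variable {A B : Formula} {P : Set Formula}

theorem sup_of_not_mem (hP : MaximalNonDeriving A P) (hB : B ∉ P) : SDeriv P (B.sup A) := by
  refine .sup_intro (by_contra fun hA => hB ?_)
  exact hP.2 hA (Set.subset_insert B P) (Set.mem_insert B P)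

theorem mem_of_sDeriv (hP : MaximalNonDeriving A P) (hB : SDeriv P B) : B ∈ P :=
  by_contra fun hBP => hP.1 (.mp hB (hP.sup_of_not_mem hBP))

theorem piDedClosed (hP : MaximalNonDeriving A P) : PiDedClosed P P := fun _ hB =>
  hP.mem_of_sDeriv (by rwa [Set.union_self] at hB)

theorem isPrimeSet (hP : MaximalNonDeriving A P) : IsPrimeSet P := by
  intro B C hBC
  by_contra! hnot
  have hBCA : SDeriv P ((B.or C).sup A) :=
    .mp_imp (hP.sup_of_not_mem hnot.2) (.mp_imp (hP.sup_of_not_mem hnot.1) (.axM6 B C A))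
  exact hP.1 (.mp (.hyp hBC) hBCA)

end MaximalNonDeriving

/-- If Σ ⊬ A then there is Π ⊇ Σ such that A ∉ Π, Π is a prime Π-theory and
Π is Π-deductively closed. -/
theorem extend_to_prime_selfclosed (S : Set Formula) (A : Formula)
    (h : ¬ SDeriv S A) :
    ∃ P : Set Formula, S ⊆ P ∧ A ∉ P ∧ PiTheory P P ∧ IsPrimeSet P ∧
      PiDedClosed P P := by
  obtain ⟨P, hSP, hP⟩ := exists_maximalNonDeriving_superset h
  exact ⟨P, hSP, fun hA => hP.1 (.hyp hA), hP.piDedClosed.piTheory, hP.isPrimeSet,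
    hP.piDedClosed⟩
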